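/- arXiv:1911.10061 — 2 statements merged into one kernel-verified Lean document; each statement's English description precedes it below -/
import Mathlib

section
/- Let n ≥ 3 and β = n − 2, let γ > 0 and 0 < η < 1, and let F : ℝⁿ → ℝ be measurable such that y ↦ (1+|y|)^γ F(y) is integrable. For x ∈ ℝⁿ let Ω₂(x) = {y : |x−y| > 1 and |y| ≤ |x|^η}. Then there exists R ≥ 1 such that the function x ↦ 𝟙_{{|x| ≥ R}}(x) · |x|^{−β} ∫_{ℝⁿ \ Ω₂(x)} F(y) dy belongs to L^p(ℝⁿ) for every p > n/(n − 2 + ηγ). -/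
/-!
A point `y` outside `Ω₂(x)` has `‖y‖ ≥ ‖x‖ ^ η` once `‖x‖` is large: either `‖y‖ > ‖x‖ ^ η`, or
`‖x - y‖ ≤ 1` and then `‖y‖ ≥ ‖x‖ - 1 ≥ ‖x‖ ^ η` because `η < 1`. There the weight satisfies
`(1 + ‖y‖) ^ γ ≥ ‖x‖ ^ (η γ)`, so the integral is `O(‖x‖ ^ (-η γ))` and the whole term is
`O((1 + ‖x‖) ^ (-(n - 2 + η γ)))`, which lies in `L^p(ℝⁿ)` as soon as `p (n - 2 + η γ) > n`.
-/

open MeasureTheory Filter Real Module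

lemma eventually_rpow_le_sub_one {η : ℝ} (hη : η < 1) : ∀ᶠ t : ℝ in atTop, t ^ η ≤ t - 1 := by
  have hsmall : ∀ᶠ t : ℝ in atTop, t ^ (η - 1) ≤ 1 / 2 := by
    have := (tendsto_rpow_neg_atTop (y := 1 - η) (by linarith)).eventually
      (ge_mem_nhds (by norm_num : (0 : ℝ) < 1 / 2))
    simpa using this
  filter_upwards [hsmall, eventually_ge_atTop 2] with t ht_small ht
  have hsplit : t ^ η = t ^ (η - 1) * t := by
    rw [← rpow_add_one (by linarith)]
    ring_nf
  nlinarith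

lemma rpow_neg_le_two_rpow_mul_one_add_rpow_neg {t s : ℝ} (ht : 1 ≤ t) (hs : 0 ≤ s) :
    t ^ (-s) ≤ 2 ^ s * (1 + t) ^ (-s) := by
  have ht0 : 0 < t := by linarith
  rw [rpow_neg ht0.le, rpow_neg (by linarith), ← inv_rpow ht0.le, ← inv_rpow (by linarith),
    ← mul_rpow (by norm_num) (by positivity)]
  gcongr
  rw [← div_eq_mul_inv, le_div_iff₀ (by linarith)]
  field_simp
  linarith

theorem memLp_one_add_norm_rpow_neg {E : Type*} [NormedAddCommGroup E] [NormedSpace ℝ E]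
    [FiniteDimensional ℝ E] [MeasurableSpace E] [BorelSpace E] (μ : Measure E)
    [μ.IsAddHaarMeasure] {s p : ℝ} (hp : 0 < p) (hsp : (finrank ℝ E : ℝ) < s * p) :
    MemLp (fun x : E => (1 + ‖x‖) ^ (-s)) (ENNReal.ofReal p) μ := by
  rw [← integrable_norm_rpow_iff (by fun_prop : Measurable _).aestronglyMeasurable
    (by simpa using hp) ENNReal.ofReal_ne_top, ENNReal.toReal_ofReal hp.le]
  refine (integrable_one_add_norm (μ := μ) hsp).congr (ae_of_all _ fun x => ?_)
  have hx : 0 ≤ 1 + ‖x‖ := by positivity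
  dsimp only
  rw [norm_of_nonneg (rpow_nonneg hx _), ← rpow_mul hx, neg_mul]

theorem MeasureTheory.AEStronglyMeasurable.setIntegral_of_measurableSet_prod {α β G : Type*}
    [MeasurableSpace α] [MeasurableSpace β] [NormedAddCommGroup G] [NormedSpace ℝ G]
    {μ : Measure α} {ν : Measure β} [SFinite ν] {f : β → G} (hf : AEStronglyMeasurable f ν)
    {S : α → Set β} (hS : MeasurableSet {p : α × β | p.2 ∈ S p.1}) :
    AEStronglyMeasurable (fun x => ∫ y in S x, f y ∂ν) μ :=
  ((hf.comp_snd (μ := μ)).indicator hS).integral_prod_right'.congr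
    (ae_of_all _ fun _ => integral_indicator (measurable_prodMk_left hS))

lemma rpow_mul_norm_setIntegral_le {E : Type*} [NormedAddCommGroup E] [MeasurableSpace E]
    {μ : Measure E} {F : E → ℝ} {γ r : ℝ} (hγ : 0 ≤ γ) (hr : 0 ≤ r)
    (hF : Integrable (fun y => (1 + ‖y‖) ^ γ * F y) μ) {S : Set E} (hS : MeasurableSet S)
    (hSr : ∀ y ∈ S, r ≤ ‖y‖) :
    r ^ γ * ‖∫ y in S, F y ∂μ‖ ≤ ∫ y, ‖(1 + ‖y‖) ^ γ * F y‖ ∂μ := by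
  have hweight : ∀ y ∈ S, r ^ γ * ‖F y‖ ≤ ‖(1 + ‖y‖) ^ γ * F y‖ := fun y hy => by
    rw [norm_mul, norm_of_nonneg (rpow_nonneg (by positivity) γ)]
    gcongr
    linarith [hSr y hy]
  calc r ^ γ * ‖∫ y in S, F y ∂μ‖ ≤ r ^ γ * ∫ y in S, ‖F y‖ ∂μ := by
        gcongr; exact norm_integral_le_integral_norm _
    _ = ∫ y in S, r ^ γ * ‖F y‖ ∂μ := (integral_const_mul _ _).symm
    _ ≤ ∫ y in S, ‖(1 + ‖y‖) ^ γ * F y‖ ∂μ :=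
        integral_mono_of_nonneg (ae_of_all _ fun y => by positivity) hF.norm.integrableOn
          (ae_restrict_of_forall_mem hS hweight)
    _ ≤ ∫ y, ‖(1 + ‖y‖) ^ γ * F y‖ ∂μ :=
        setIntegral_le_integral hF.norm (ae_of_all _ fun y => norm_nonneg _)

section OmegaTwo

variable {E : Type*} [NormedAddCommGroup E]

def omegaTwo (η : ℝ) (x : E) : Set E := {y | 1 < ‖x - y‖ ∧ ‖y‖ ≤ ‖x‖ ^ η}

lemma compl_omegaTwo_subset {η : ℝ} {x : E} (hx : ‖x‖ ^ η ≤ ‖x‖ - 1) :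
    (omegaTwo η x)ᶜ ⊆ {y | ‖x‖ ^ η ≤ ‖y‖} := by
  intro y hy
  simp only [omegaTwo, Set.mem_compl_iff, Set.mem_ofPred_eq, not_and_or, not_lt, not_le] at hy ⊢
  rcases hy with hnear | hfar
  · linarith [norm_sub_norm_le x y]
  · exact hfar.le

variable [MeasurableSpace E] [BorelSpace E] [SecondCountableTopology E]

lemma measurableSet_compl_omegaTwo (η : ℝ) :
    MeasurableSet {q : E × E | q.2 ∈ (omegaTwo η q.1)ᶜ} := by
  have hdist : Measurable fun q : E × E => ‖q.1 - q.2‖ := by fun_prop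
  have hnorm : Measurable fun q : E × E => ‖q.2‖ := by fun_prop
  have hbound : Measurable fun q : E × E => ‖q.1‖ ^ η := by fun_prop
  exact ((measurableSet_lt measurable_const hdist).inter (measurableSet_le hnorm hbound)).compl

lemma norm_setIntegral_compl_omegaTwo_le {μ : Measure E} {F : E → ℝ} {γ η : ℝ} (hγ : 0 ≤ γ)
    (hF : Integrable (fun y => (1 + ‖y‖) ^ γ * F y) μ) {x : E} (hx0 : 0 < ‖x‖)
    (hx : ‖x‖ ^ η ≤ ‖x‖ - 1) :
    ‖∫ y in (omegaTwo η x)ᶜ, F y ∂μ‖ ≤ (∫ y, ‖(1 + ‖y‖) ^ γ * F y‖ ∂μ) * ‖x‖ ^ (-(η * γ)) := by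
  have h := rpow_mul_norm_setIntegral_le (S := (omegaTwo η x)ᶜ) hγ (rpow_nonneg hx0.le η) hF
    (measurable_prodMk_left (measurableSet_compl_omegaTwo η)) (compl_omegaTwo_subset hx)
  rw [← rpow_mul hx0.le] at h
  rwa [rpow_neg hx0.le, ← div_eq_mul_inv, le_div_iff₀ (rpow_pos_of_pos hx0 _), mul_comm]

lemma norm_rpow_neg_mul_setIntegral_compl_omegaTwo_le {μ : Measure E} {F : E → ℝ}
    {β γ η : ℝ} (hγ : 0 ≤ γ) (hs : 0 ≤ β + η * γ)
    (hF : Integrable (fun y => (1 + ‖y‖) ^ γ * F y) μ) {x : E} (hx1 : 1 ≤ ‖x‖)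
    (hx : ‖x‖ ^ η ≤ ‖x‖ - 1) :
    ‖‖x‖ ^ (-β) * ∫ y in (omegaTwo η x)ᶜ, F y ∂μ‖ ≤
      (∫ y, ‖(1 + ‖y‖) ^ γ * F y‖ ∂μ) * 2 ^ (β + η * γ) * (1 + ‖x‖) ^ (-(β + η * γ)) := by
  set C := ∫ y, ‖(1 + ‖y‖) ^ γ * F y‖ ∂μ
  have hx0 : 0 < ‖x‖ := by linarith
  calc ‖‖x‖ ^ (-β) * ∫ y in (omegaTwo η x)ᶜ, F y ∂μ‖
      ≤ ‖x‖ ^ (-β) * (C * ‖x‖ ^ (-(η * γ))) := by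
        rw [norm_mul, norm_of_nonneg (rpow_nonneg hx0.le _)]
        gcongr
        exact norm_setIntegral_compl_omegaTwo_le hγ hF hx0 hx
    _ = C * ‖x‖ ^ (-(β + η * γ)) := by rw [mul_left_comm, ← rpow_add hx0, neg_add]
    _ ≤ C * (2 ^ (β + η * γ) * (1 + ‖x‖) ^ (-(β + η * γ))) := by
        gcongr
        exact rpow_neg_le_two_rpow_mul_one_add_rpow_neg hx1 hs
    _ = C * 2 ^ (β + η * γ) * (1 + ‖x‖) ^ (-(β + η * γ)) := (mul_assoc _ _ _).symm

end OmegaTwo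

theorem complement_Omega2_term_memLp_general
    (n : ℕ) (hn : 3 ≤ n) (γ η : ℝ) (hγ : 0 < γ) (hη0 : 0 < η) (hη1 : η < 1)
    (F : EuclideanSpace ℝ (Fin n) → ℝ)
    (hF : Integrable (fun y : EuclideanSpace ℝ (Fin n) => (1 + ‖y‖) ^ γ * F y)) :
    ∃ R : ℝ, 1 ≤ R ∧
      ∀ p : ℝ, (n : ℝ) / ((n : ℝ) - 2 + η * γ) < p →
        MemLp
          ({x : EuclideanSpace ℝ (Fin n) | R ≤ ‖x‖}.indicator fun x =>
            ‖x‖ ^ (-((n : ℝ) - 2)) *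
              ∫ y in {y : EuclideanSpace ℝ (Fin n) | 1 < ‖x - y‖ ∧ ‖y‖ ≤ ‖x‖ ^ η}ᶜ, F y)
          (ENNReal.ofReal p) := by
  obtain ⟨R, hR⟩ :=
    ((eventually_rpow_le_sub_one hη1).and (eventually_ge_atTop 1)).exists_forall_of_atTop
  refine ⟨R, (hR R le_rfl).2, fun p hp => ?_⟩
  set s := (n : ℝ) - 2 + η * γ
  have hs : 0 < s := by
    have : (3 : ℝ) ≤ n := by exact_mod_cast hn
    nlinarith [mul_pos hη0 hγ]
  have hp0 : 0 < p := (div_nonneg n.cast_nonneg hs.le).trans_lt hp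
  have hsp : (finrank ℝ (EuclideanSpace ℝ (Fin n)) : ℝ) < s * p := by
    rwa [finrank_euclideanSpace_fin, ← div_lt_iff₀' hs]
  have hFm : AEStronglyMeasurable F :=
    ((Measurable.aestronglyMeasurable (by fun_prop)).mul hF.aestronglyMeasurable).congr
      (ae_of_all _ fun y => inv_mul_cancel_left₀ (rpow_pos_of_pos (by positivity) γ).ne' (F y))
  have hRset : MeasurableSet {x : EuclideanSpace ℝ (Fin n) | R ≤ ‖x‖} :=
    measurableSet_le measurable_const measurable_norm
  rw [memLp_indicator_iff_restrict hRset]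
  refine (((memLp_one_add_norm_rpow_neg volume hp0 hsp).const_mul
    ((∫ y, ‖(1 + ‖y‖) ^ γ * F y‖) * 2 ^ s)).restrict _).of_le
    ((Measurable.aestronglyMeasurable (by fun_prop)).mul
      (hFm.setIntegral_of_measurableSet_prod (measurableSet_compl_omegaTwo η))).restrict ?_
  filter_upwards [ae_restrict_mem hRset] with x hx
  exact (norm_rpow_neg_mul_setIntegral_compl_omegaTwo_le hγ.le hs.le hF (hR _ hx).2
    (hR _ hx).1).trans (le_norm_self _)

/-- estimate (eq: small arguments in Lp) of the paper: let `n ≥ 3`,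
`β = n - 2`, `γ > 0`, `0 < η < 1` and let `F` be measurable with `(1+|y|)^γ F(y) ∈ L¹(ℝⁿ)`.
With `Ω₂(x) = {y : |x-y| > 1, |y| ≤ |x|^η}`, there is `R ≥ 1` such that
`𝟙_{|x| ≥ R}(x) · |x|^{-β} ∫_{ℝⁿ \ Ω₂(x)} F(y) dy` belongs to `L^p(ℝⁿ)` for every
`p > n/(n - 2 + ηγ)`. -/
theorem complement_Omega2_term_memLp
    (n : ℕ) (hn : 3 ≤ n) (γ η : ℝ) (hγ : 0 < γ) (hη0 : 0 < η) (hη1 : η < 1)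
    (F : EuclideanSpace ℝ (Fin n) → ℝ) (hFmeas : Measurable F)
    (hF : Integrable (fun y : EuclideanSpace ℝ (Fin n) => (1 + ‖y‖) ^ γ * F y)) :
    ∃ R : ℝ, 1 ≤ R ∧
      ∀ p : ℝ, (n : ℝ) / ((n : ℝ) - 2 + η * γ) < p →
        MemLp
          ({x : EuclideanSpace ℝ (Fin n) | R ≤ ‖x‖}.indicator fun x =>
            ‖x‖ ^ (-((n : ℝ) - 2)) *
              ∫ y in {y : EuclideanSpace ℝ (Fin n) | 1 < ‖x - y‖ ∧ ‖y‖ ≤ ‖x‖ ^ η}ᶜ, F y)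
          (ENNReal.ofReal p) :=
  complement_Omega2_term_memLp_general n hn γ η hγ hη0 hη1 F hF
end

section
/- Let d ≥ 3 and k ≥ 1 be integers, let E be a real inner product space of dimension d + k with its Lebesgue (Haar) measure, let F ⊆ E be a d-dimensional subspace and P the orthogonal projection onto F. Let c, ν, A > 0 with ν < d/2 − 1, let V : F → ℝ be measurable with |V(q)| ≤ c|q|^{−2−ν} for all q ∈ F with |q| ≥ A, and let 0 < γ < ν. Then for every real α with α > (d+k)/2 − 1 − (ν − γ), the function x ↦ (1+|x|)^{−α+γ}(1+|Px|) V(Px) · 𝟙_{{|Px| ≥ A}}(x) belongs to L²(E). -/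
/-!
On `{A ≤ |Px|}` the decay of `V` gives `|V(Px)| ≲ (1+|Px|)^{-2-ν}`, and since `|Px|` and
`|x - Px|` are at most `|x|`, the weight `(1+|x|)^{-α+γ}` splits into a power of `1+|Px|` times
a power of `1+|x - Px|`. Spending half the margin `α - ((d+k)/2 - 1 - ν + γ)` on each factor,
the integrand is dominated by `(1+|Px|)^{-d/2-ε}(1+|x - Px|)^{-k/2-ε}`. Its square is a
product of a function of `Px ∈ F` and one of `x - Px ∈ Fᗮ`, integrable against Haar measure
on `F` and on `Fᗮ` respectively, and any Haar measure on `E` is a multiple of the image of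
their product under `F × Fᗮ ≃ E`.
-/

open MeasureTheory Module

theorem rpow_neg_le_mul_one_add_rpow_neg {A r β : ℝ} (hA : 0 < A) (hAr : A ≤ r) (hβ : 0 ≤ β) :
    r ^ (-β) ≤ ((1 + A) / A) ^ β * (1 + r) ^ (-β) := by
  have hr : 0 < r := hA.trans_le hAr
  calc r ^ (-β) = ((1 + r) / r) ^ β * (1 + r) ^ (-β) := by
        rw [Real.div_rpow (by positivity) hr.le, Real.rpow_neg hr.le, Real.rpow_neg (by positivity)]
        field_simp
    _ ≤ ((1 + A) / A) ^ β * (1 + r) ^ (-β) := by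
        have hratio : (1 + r) / r ≤ (1 + A) / A := by
          rw [div_le_div_iff₀ hr hA]
          nlinarith
        gcongr

theorem one_add_rpow_neg_add_le {x u v a b : ℝ} (hu : 0 ≤ u) (hux : u ≤ x) (hv : 0 ≤ v)
    (hvx : v ≤ x) (ha : 0 ≤ a) (hb : 0 ≤ b) :
    (1 + x) ^ (-(a + b)) ≤ (1 + u) ^ (-a) * (1 + v) ^ (-b) := by
  rw [neg_add, Real.rpow_add (by linarith)]
  exact mul_le_mul (Real.rpow_le_rpow_of_nonpos (by linarith) (by linarith) (by linarith))
    (Real.rpow_le_rpow_of_nonpos (by linarith) (by linarith) (by linarith))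
    (Real.rpow_nonneg (by linarith) _) (by positivity)

theorem abs_one_add_rpow_mul_le {A q ξ x s t β c v : ℝ} (hA : 0 < A) (hAq : A ≤ q) (hqx : q ≤ x)
    (hξ : 0 ≤ ξ) (hξx : ξ ≤ x) (hs : β - 1 ≤ s) (ht : 0 ≤ t) (hβ : 0 ≤ β)
    (hv : |v| ≤ c * q ^ (-β)) :
    |(1 + x) ^ (-(s - β + 1 + t)) * (1 + q) * v| ≤
      c * ((1 + A) / A) ^ β * ((1 + q) ^ (-s) * (1 + ξ) ^ (-t)) := by
  have hq : 0 < q := hA.trans_le hAq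
  have hx : 0 ≤ x := by linarith
  have hc : 0 ≤ c := nonneg_of_mul_nonneg_left ((abs_nonneg v).trans hv) (by positivity)
  have hqv : (1 + q) * |v| ≤ c * ((1 + A) / A) ^ β * (1 + q) ^ (-(β - 1)) :=
    calc (1 + q) * |v| ≤ (1 + q) * (c * (((1 + A) / A) ^ β * (1 + q) ^ (-β))) := by
          gcongr
          exact hv.trans (by gcongr; exact rpow_neg_le_mul_one_add_rpow_neg hA hAq hβ)
      _ = c * ((1 + A) / A) ^ β * (1 + q) ^ (-(β - 1)) := by
          rw [show -(β - 1) = 1 + -β by ring, Real.rpow_add (by positivity), Real.rpow_one]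
          ring
  rw [abs_mul, abs_mul, abs_of_nonneg (by positivity), abs_of_nonneg (by positivity), mul_assoc]
  calc (1 + x) ^ (-(s - β + 1 + t)) * ((1 + q) * |v|)
      ≤ ((1 + q) ^ (-(s - β + 1)) * (1 + ξ) ^ (-t)) *
          (c * ((1 + A) / A) ^ β * (1 + q) ^ (-(β - 1))) :=
        mul_le_mul (one_add_rpow_neg_add_le hq.le hqx hξ hξx (by linarith) ht) hqv
          (by positivity) (by positivity)
    _ = c * ((1 + A) / A) ^ β * ((1 + q) ^ (-s) * (1 + ξ) ^ (-t)) := by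
        rw [show -s = -(s - β + 1) + -(β - 1) by ring, Real.rpow_add (by positivity)]
        ring

section
variable {E : Type*} [NormedAddCommGroup E] [NormedSpace ℝ E] [FiniteDimensional ℝ E]
  [MeasurableSpace E] [BorelSpace E]

theorem MeasureTheory.Integrable.mul_comp_projectionOnto {p q : Submodule ℝ E} (hpq : IsCompl p q)
    {μp : Measure p} [μp.IsAddHaarMeasure] {μq : Measure q} [μq.IsAddHaarMeasure]
    {f : p → ℝ} {g : q → ℝ} (hf : Integrable f μp) (hg : Integrable g μq)
    (μ : Measure E) [μ.IsAddHaarMeasure] :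
    Integrable (fun x => f (p.projectionOnto q hpq x) * g (q.projectionOnto p hpq.symm x)) μ := by
  let L : E ≃L[ℝ] p × q := (p.prodEquivOfIsCompl q hpq).symm.toContinuousLinearEquiv
  have : (μ.map L).IsAddHaarMeasure := L.isAddHaarMeasure_map μ
  have hprod : Integrable (fun z : p × q => f z.1 * g z.2) (μ.map L) := by
    rw [Measure.isAddLeftInvariant_eq_smul (μ.map L) (μp.prod μq)]
    exact (hf.mul_prod hg).smul_measure ENNReal.coe_ne_top
  convert (integrable_map_equiv L.toHomeomorph.toMeasurableEquiv _).1 hprod using 2 with x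
  simp [L]

end

section
variable {E : Type*} [NormedAddCommGroup E] [InnerProductSpace ℝ E]

theorem Submodule.orthogonalProjectionOnto_orthogonal_eq_projectionOnto (K : Submodule ℝ E)
    [K.HasOrthogonalProjection] (x : E) :
    Kᗮ.orthogonalProjectionOnto x = Kᗮ.projectionOnto K K.isCompl_orthogonal.symm x := by
  ext
  rw [Submodule.orthogonalProjectionOnto_orthogonal, Submodule.coe_projectionOnto_apply,
    Submodule.projection_eq_self_sub_projection]
  rfl

variable [FiniteDimensional ℝ E] [MeasurableSpace E] [BorelSpace E]

theorem memLp_two_one_add_norm_orthogonalProjectionOnto_rpow_neg (μ : Measure E)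
    [μ.IsAddHaarMeasure] (K : Submodule ℝ E) {s t : ℝ} (hs : finrank ℝ K < 2 * s)
    (ht : finrank ℝ Kᗮ < 2 * t) :
    MemLp (fun x => (1 + ‖K.orthogonalProjectionOnto x‖) ^ (-s) *
      (1 + ‖Kᗮ.orthogonalProjectionOnto x‖) ^ (-t)) 2 μ := by
  have hint := (integrable_one_add_norm (μ := Measure.addHaar) hs).mul_comp_projectionOnto
    K.isCompl_orthogonal (integrable_one_add_norm (μ := Measure.addHaar) ht) μ
  rw [memLp_two_iff_integrable_sq (by fun_prop)]
  refine hint.congr (Filter.Eventually.of_forall fun x => ?_)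
  simp only [K.orthogonalProjectionOnto_orthogonal_eq_projectionOnto,
    ← K.orthogonalProjectionOnto_apply_eq_projectionOnto]
  rw [mul_pow, ← Real.rpow_mul_natCast (by positivity), ← Real.rpow_mul_natCast (by positivity)]
  ring_nf

end

theorem far_region_L2_estimate_general
    {E : Type*} [NormedAddCommGroup E] [InnerProductSpace ℝ E]
    [FiniteDimensional ℝ E] [MeasurableSpace E] [BorelSpace E]
    (d k : ℕ) (hdim : Module.finrank ℝ E = d + k)
    (F : Submodule ℝ E) (hF : Module.finrank ℝ F = d)
    (μ : Measure E) [μ.IsAddHaarMeasure]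
    (c ν A : ℝ) (hc : 0 < c) (hν : 0 < ν) (hνd : ν < (d : ℝ) / 2 - 1) (hA : 0 < A)
    (V : F → ℝ) (hVmeas : Measurable V)
    (hVdecay : ∀ q : F, A ≤ ‖q‖ → |V q| ≤ c * ‖q‖ ^ (-(2 + ν)))
    (γ : ℝ) :
    ∀ α : ℝ, ((d : ℝ) + (k : ℝ)) / 2 - 1 - (ν - γ) < α →
      MemLp
        ({x : E | A ≤ ‖(Submodule.orthogonalProjectionOnto F x : E)‖}.indicator fun x =>
          (1 + ‖x‖) ^ (-α + γ) * (1 + ‖(Submodule.orthogonalProjectionOnto F x : E)‖) *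
            V (Submodule.orthogonalProjectionOnto F x))
        2 μ := by
  intro α hα
  set ε := (α - γ - ((d + k) / 2 - 1 - ν)) / 2 with hε
  have hε0 : 0 < ε := by linarith
  have hFperp : finrank ℝ Fᗮ = k := by
    have := F.finrank_add_finrank_orthogonal
    omega
  have hweight := memLp_two_one_add_norm_orthogonalProjectionOnto_rpow_neg μ F
    (s := d / 2 + ε) (t := k / 2 + ε) (by rw [hF]; linarith) (by rw [hFperp]; linarith)
  refine hweight.of_le_mul (c := c * ((1 + A) / A) ^ (2 + ν)) ?_
    (Filter.Eventually.of_forall fun x => ?_)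
  · exact (Measurable.indicator (by fun_prop)
      (measurableSet_le measurable_const (by fun_prop))).aestronglyMeasurable
  by_cases hx : x ∈ {x : E | A ≤ ‖(F.orthogonalProjectionOnto x : E)‖}
  · rw [Set.indicator_of_mem hx, Real.norm_eq_abs, Real.norm_of_nonneg (by positivity),
      show -α + γ = -(d / 2 + ε - (2 + ν) + 1 + (k / 2 + ε)) by linarith]
    exact abs_one_add_rpow_mul_le hA hx (F.norm_orthogonalProjectionOnto_apply_le x)
      (norm_nonneg _) (Fᗮ.norm_orthogonalProjectionOnto_apply_le x) (by linarith)
      (by positivity) (by linarith) (hVdecay _ hx)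
  · rw [Set.indicator_of_notMem hx, norm_zero]
    positivity

/-- the far-region `L²` estimate in the proof of Proposition 1 of the
paper: `E` a real inner product space of dimension `d + k` (`d ≥ 3`, `k ≥ 1`) with Haar
measure `μ`, `F` a `d`-dimensional subspace with orthogonal projection `P`,
`|V(q)| ≤ c|q|^{-2-ν}` for `|q| ≥ A` with `0 < ν < d/2 - 1`, and `0 < γ < ν`.  Then for
every `α > (d+k)/2 - 1 - (ν - γ)` the function
`(1+|x|)^{-α+γ}(1+|Px|) V(Px) 𝟙_{|Px| ≥ A}` belongs to `L²(E)`. -/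
theorem far_region_L2_estimate
    {E : Type*} [NormedAddCommGroup E] [InnerProductSpace ℝ E]
    [FiniteDimensional ℝ E] [MeasurableSpace E] [BorelSpace E]
    (d k : ℕ) (hd : 3 ≤ d) (hk : 1 ≤ k) (hdim : Module.finrank ℝ E = d + k)
    (F : Submodule ℝ E) (hF : Module.finrank ℝ F = d)
    (μ : Measure E) [μ.IsAddHaarMeasure]
    (c ν A : ℝ) (hc : 0 < c) (hν : 0 < ν) (hνd : ν < (d : ℝ) / 2 - 1) (hA : 0 < A)
    (V : F → ℝ) (hVmeas : Measurable V)
    (hVdecay : ∀ q : F, A ≤ ‖q‖ → |V q| ≤ c * ‖q‖ ^ (-(2 + ν)))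
    (γ : ℝ) (hγ0 : 0 < γ) (hγν : γ < ν) :
    ∀ α : ℝ, ((d : ℝ) + (k : ℝ)) / 2 - 1 - (ν - γ) < α →
      MemLp
        ({x : E | A ≤ ‖(Submodule.orthogonalProjectionOnto F x : E)‖}.indicator fun x =>
          (1 + ‖x‖) ^ (-α + γ) * (1 + ‖(Submodule.orthogonalProjectionOnto F x : E)‖) *
            V (Submodule.orthogonalProjectionOnto F x))
        2 μ :=
  far_region_L2_estimate_general d k hdim F hF μ c ν A hc hν hνd hA V hVmeas hVdecay γ
end
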